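/- Fix a real k ≥ 2 and let T_k(x) := ∫_x^∞ t^{k/2−1} e^{−t/2} / (2^{k/2} Γ(k/2)) dt be the chi-squared tail with k degrees of freedom. Then, as x → +∞, (−ln T_k(x))^{k−2} · ( Γ(k/2) · T_k(x) )^{−2} is asymptotically equivalent to e^{x}, i.e. (−ln T_k(x))^{k−2} · ( Γ(k/2) · T_k(x) )^{−2} · e^{−x} → 1. -/

import Mathlib

/-!
With `s = k/2 - 1`, the tail `∫_x^∞ t^s e^{-bt} dt` is squeezed between `x^s e^{-bx} / b`
(as `t^s ≥ x^s`) and `x^s e^{-bx} / (b - s/x)` (as `t^s ≤ x^s e^{s(t-x)/x}`), so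
`T_k(x) ∼ 2 x^s e^{-x/2} / (2^{k/2} Γ(k/2))`. Taking logarithms gives `-log T_k(x) ∼ x/2`, and
the expression of the theorem equals
`(-log T_k(x) / x)^{k-2} (Γ(k/2) T_k(x) / (x^s e^{-x/2}))^{-2}`, whose limit is
`2^{2-k} · 2^{k-2} = 1`.
-/

open Real Filter MeasureTheory Set Topology

/-- The chi-squared tail with `k` degrees of freedom. -/
noncomputable def chiSqTail (k : ℝ) (x : ℝ) : ℝ :=
  ∫ t in Set.Ioi x, t ^ (k / 2 - 1) * Real.exp (-t / 2) / (2 ^ (k / 2) * Real.Gamma (k / 2))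

noncomputable def rpowExpTail (s b x : ℝ) : ℝ :=
  ∫ t in Ioi x, t ^ s * exp (-b * t)

lemma rpow_le_rpow_mul_exp {s x t : ℝ} (hs : 0 ≤ s) (hx : 0 < x) (hxt : x ≤ t) :
    t ^ s ≤ x ^ s * exp (s / x * (t - x)) := by
  have ht : 0 < t := hx.trans_le hxt
  have hlog : log t - log x ≤ (t - x) / x := by
    have := log_le_sub_one_of_pos (div_pos ht hx)
    rwa [log_div ht.ne' hx.ne', div_sub_one hx.ne'] at this
  rw [rpow_def_of_pos ht, rpow_def_of_pos hx, ← exp_add, exp_le_exp, div_mul_eq_mul_div,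
    mul_div_assoc]
  nlinarith [mul_le_mul_of_nonneg_left hlog hs]

lemma integrableOn_rpow_mul_exp_neg_mul_Ioi {s b x : ℝ} (hs : -1 < s) (hb : 0 < b)
    (hx : 0 ≤ x) : IntegrableOn (fun t => t ^ s * exp (-b * t)) (Ioi x) := by
  have := integrableOn_rpow_mul_exp_neg_mul_rpow hs one_pos hb
  simp only [rpow_one] at this
  exact this.mono_set (Ioi_subset_Ioi hx)

lemma integral_exp_neg_mul_Ioi {b : ℝ} (hb : 0 < b) (x : ℝ) :
    ∫ t in Ioi x, exp (-b * t) = exp (-b * x) / b := by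
  rw [integral_exp_mul_Ioi (neg_neg_of_pos hb), neg_div_neg_eq]

lemma rpow_mul_exp_div_le_rpowExpTail {s b x : ℝ} (hs : 0 ≤ s) (hb : 0 < b) (hx : 0 ≤ x) :
    x ^ s * exp (-b * x) / b ≤ rpowExpTail s b x := by
  rw [mul_div_assoc, ← integral_exp_neg_mul_Ioi hb, ← integral_const_mul]
  refine setIntegral_mono_on ((integrableOn_exp_mul_Ioi (neg_neg_of_pos hb) x).const_mul _)
    (integrableOn_rpow_mul_exp_neg_mul_Ioi (by linarith) hb hx) measurableSet_Ioi
    fun t ht => ?_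
  gcongr
  exact ht.le

lemma rpowExpTail_le {s b x : ℝ} (hs : 0 ≤ s) (hx : 0 < x) (hsx : s < b * x) :
    rpowExpTail s b x ≤ x ^ s * exp (-b * x) / (b - s / x) := by
  have hc : 0 < b - s / x := by rw [sub_pos, div_lt_iff₀ hx]; exact hsx
  have hb : 0 < b := by nlinarith
  have hbound : ∀ t ∈ Ioi x,
      t ^ s * exp (-b * t) ≤ x ^ s * exp (-s) * exp (-(b - s / x) * t) := by
    intro t ht
    calc t ^ s * exp (-b * t) ≤ x ^ s * exp (s / x * (t - x)) * exp (-b * t) := by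
          gcongr; exact rpow_le_rpow_mul_exp hs hx (le_of_lt ht)
      _ = x ^ s * exp (-s) * exp (-(b - s / x) * t) := by
          rw [mul_assoc, mul_assoc, ← exp_add, ← exp_add]
          congr 2
          field_simp
          ring
  calc rpowExpTail s b x ≤ ∫ t in Ioi x, x ^ s * exp (-s) * exp (-(b - s / x) * t) :=
        setIntegral_mono_on (integrableOn_rpow_mul_exp_neg_mul_Ioi (by linarith) hb hx.le)
          ((integrableOn_exp_mul_Ioi (neg_neg_of_pos hc) x).const_mul _) measurableSet_Ioi hbound
    _ = x ^ s * exp (-b * x) / (b - s / x) := by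
        rw [integral_const_mul, integral_exp_neg_mul_Ioi hc, mul_div_assoc', mul_assoc,
          ← exp_add]
        congr 3
        field_simp
        ring

lemma tendsto_rpowExpTail_div {s b : ℝ} (hs : 0 ≤ s) (hb : 0 < b) :
    Tendsto (fun x => rpowExpTail s b x / (x ^ s * exp (-b * x))) atTop (𝓝 b⁻¹) := by
  have hupper : Tendsto (fun x => (b - s / x)⁻¹) atTop (𝓝 b⁻¹) := by
    simpa using
      ((tendsto_const_nhds.div_atTop tendsto_id).const_sub b).inv₀ (by simpa using hb.ne')
  refine tendsto_of_tendsto_of_tendsto_of_le_of_le' tendsto_const_nhds hupper ?_ ?_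
  · filter_upwards [eventually_gt_atTop 0] with x hx
    rw [le_div_iff₀ (by positivity), inv_mul_eq_div]
    exact rpow_mul_exp_div_le_rpowExpTail hs hb hx.le
  · filter_upwards [eventually_gt_atTop 0, eventually_gt_atTop (s / b)] with x hx hsx
    rw [div_le_iff₀ (by positivity), inv_mul_eq_div]
    exact rpowExpTail_le hs hx (by rwa [div_lt_iff₀' hb] at hsx)

lemma tendsto_neg_log_div_self_of_tendsto_div {f : ℝ → ℝ} {s b L : ℝ} (hL : 0 < L)
    (hf : Tendsto (fun x => f x / (x ^ s * exp (-b * x))) atTop (𝓝 L)) :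
    Tendsto (fun x => -log (f x) / x) atTop (𝓝 b) := by
  have hlim : Tendsto (fun x => b - s * (log x / x) - log (f x / (x ^ s * exp (-b * x))) / x)
      atTop (𝓝 (b - s * 0 - 0)) :=
    (tendsto_const_nhds.sub (isLittleO_log_id_atTop.tendsto_div_nhds_zero.const_mul s)).sub
      (((continuousAt_log hL.ne').tendsto.comp hf).div_atTop tendsto_id)
  rw [mul_zero, sub_zero, sub_zero] at hlim
  refine hlim.congr' ?_
  filter_upwards [eventually_gt_atTop 0, hf.eventually_const_lt hL] with x hx hfx
  have hD : 0 < x ^ s * exp (-b * x) := by positivity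
  have hfpos : 0 < f x := (div_pos_iff_of_pos_right hD).mp hfx
  rw [log_div hfpos.ne' hD.ne', log_mul (by positivity) (exp_pos _).ne', log_rpow hx, log_exp]
  field_simp
  ring

lemma chiSqTail_eq_rpowExpTail_div (k x : ℝ) :
    chiSqTail k x = rpowExpTail (k / 2 - 1) (1 / 2) x / (2 ^ (k / 2) * Gamma (k / 2)) := by
  rw [chiSqTail, integral_div, rpowExpTail]
  congr 1
  refine setIntegral_congr_fun measurableSet_Ioi fun t _ => ?_
  ring_nf

lemma tendsto_chiSqTail_div {k : ℝ} (hk : 2 ≤ k) :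
    Tendsto (fun x => chiSqTail k x / (x ^ (k / 2 - 1) * exp (-(1 / 2) * x))) atTop
      (𝓝 (2 / (2 ^ (k / 2) * Gamma (k / 2)))) := by
  have h := (tendsto_rpowExpTail_div (s := k / 2 - 1) (by linarith) one_half_pos).div_const
    (2 ^ (k / 2) * Gamma (k / 2))
  rw [inv_div, div_one] at h
  refine h.congr fun x => ?_
  rw [chiSqTail_eq_rpowExpTail_div, div_right_comm]

lemma rpow_mul_rpow_neg_two_mul_exp_neg {k x y G : ℝ} (hx : 0 < x) (hy : 0 ≤ y) (hG : 0 ≤ G) :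
    y ^ (k - 2) * G ^ (-2 : ℝ) * exp (-x) =
      (y / x) ^ (k - 2) * (G / (x ^ (k / 2 - 1) * exp (-(1 / 2) * x))) ^ (-2 : ℝ) := by
  have hD : (x ^ (k / 2 - 1) * exp (-(1 / 2) * x)) ^ (-2 : ℝ) = (x ^ (k - 2))⁻¹ * exp x := by
    rw [mul_rpow (by positivity) (exp_pos _).le, ← rpow_mul hx.le, ← exp_mul,
      show (k / 2 - 1) * -2 = -(k - 2) by ring, rpow_neg hx.le, show -(1 / 2) * x * -2 = x by ring]
  rw [div_rpow hy hx.le, div_rpow hG (by positivity), hD, exp_neg]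
  field_simp

/-- For fixed real `k ≥ 2`, as `x → +∞`,
`(-ln T_k(x))^(k-2) · (Γ(k/2) T_k(x))^(-2) ∼ e^x`. -/
theorem chiSq_tail_exp_asymptotic (k : ℝ) (hk : 2 ≤ k) :
    Tendsto
      (fun x : ℝ =>
        (-Real.log (chiSqTail k x)) ^ (k - 2) * (Real.Gamma (k / 2) * chiSqTail k x) ^ (-2 : ℝ) *
          Real.exp (-x))
      atTop (nhds 1) := by
  have hΓ : 0 < Gamma (k / 2) := Gamma_pos_of_pos (by linarith)
  have hratio := tendsto_chiSqTail_div hk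
  have hlog : Tendsto (fun x => -log (chiSqTail k x) / x) atTop (𝓝 (1 / 2)) :=
    tendsto_neg_log_div_self_of_tendsto_div (by positivity) hratio
  have hlim := (hlog.rpow_const (p := k - 2) (Or.inl one_half_pos.ne')).mul
    ((hratio.const_mul (Gamma (k / 2))).rpow_const (p := -2) (Or.inl (by positivity)))
  have hone : (1 / 2 : ℝ) ^ (k - 2) *
      (Gamma (k / 2) * (2 / (2 ^ (k / 2) * Gamma (k / 2)))) ^ (-2 : ℝ) = 1 := by
    have hconst : Gamma (k / 2) * (2 / (2 ^ (k / 2) * Gamma (k / 2))) = 2 ^ (1 - k / 2) := by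
      rw [rpow_sub two_pos, rpow_one]
      field_simp
    rw [hconst, ← rpow_mul zero_le_two, one_div, inv_rpow zero_le_two, ← rpow_neg zero_le_two,
      ← rpow_add two_pos, show -(k - 2) + (1 - k / 2) * -2 = 0 by ring, rpow_zero]
  rw [hone] at hlim
  refine hlim.congr' ?_
  filter_upwards [eventually_gt_atTop 0, hlog.eventually_const_lt one_half_pos,
    hratio.eventually_const_lt (by positivity)] with x hx hlogx hratiox
  have hT : 0 < chiSqTail k x := (div_pos_iff_of_pos_right (by positivity)).mp hratiox
  rw [← mul_div_assoc]
  exact (rpow_mul_rpow_neg_two_mul_exp_neg hx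
    ((div_pos_iff_of_pos_right hx).mp hlogx).le (by positivity)).symm
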